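/- Let f : ℝⁿ → ℝ be α-strongly convex (α > 0) and L-smooth with κ = L/α > 1, let Ψ : ℝⁿ → ℝ ∪ {+∞} be proper, closed and convex, set F = f + Ψ, and let x* be the minimizer of F. Fix x₀ ∈ ℝⁿ, let w₀ = x₀, and for k ≥ 1 define x_k = prox_{Ψ/L}(w_{k−1} − ∇f(w_{k−1})/L) and w_k = x_k + θ(x_k − x_{k−1}) with θ = (√κ − 1)/(√κ + 1). Define y₀ = x₀ and y_k = x_k + (√κ − 1)(x_k − x_{k−1}) for k ≥ 1. Define scalars σ̃₀² = ‖y₀ − x*‖² + 2(F(x₀) − F(x*))/α and σ̃_{k+1}² = (1 − κ^{−1/2}) σ̃_k² − (κ^{1/2} − κ^{−1/2}) ‖w_k − x_k‖². Then for every k ≥ 0, ‖y_k − x*‖² + 2(F(x_k) − F(x*))/α ≤ σ̃_k². -/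

import Mathlib

/-!
One proximal gradient step from `w_k` satisfies the three-point inequality
`F(x_{k+1}) + L/2 ‖x_{k+1} - z‖² ≤ F(z) + (L - α)/2 ‖w_k - z‖²` for every `z` with `Ψ z < ⊤`:
prox optimality bounds `Ψ(x_{k+1})`, `L`-smoothness and `α`-strong convexity of `f` at `w_k`
bound `f(x_{k+1})`. Averaging the instances `z = x_k` and `z = x*` with weights `1 - κ^{-1/2}`
and `κ^{-1/2}` and scaling by `2/α` gives the recursion for `σ̃`: since
`y_k = x_k + (√κ + 1)(w_k - x_k)`, the norm terms combine through an exact identity in which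
`x_{k+1}` cancels.
-/

open scoped RealInnerProductSpace
open Filter Topology

theorem le_of_forall_le_add_mul {a b c : ℝ}
    (h : ∀ t : ℝ, 0 < t → t ≤ 1 → a ≤ b + t * c) : a ≤ b := by
  have hlim : Tendsto (fun t : ℝ => b + t * c) (𝓝[>] 0) (𝓝 b) := by
    simpa using (tendsto_const_nhds.add (tendsto_id.mul_const c)).mono_left
      (nhdsWithin_le_nhds (a := (0 : ℝ)))
  refine ge_of_tendsto hlim ?_
  filter_upwards [Ioc_mem_nhdsGT one_pos] with t ht using h t ht.1 ht.2

theorem EReal.ne_top_of_coe_eq_add_mul_sub {r a c : ℝ} {u v : EReal} (hc : 0 < c)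
    (hu : u ≠ ⊥) (hv : v ≠ ⊥) (h : (r : EReal) = a + c * (u - v)) : u ≠ ⊤ ∧ v ≠ ⊤ := by
  induction u using EReal.rec <;> induction v using EReal.rec <;>
    simp_all [EReal.coe_mul_top_of_pos hc, EReal.coe_mul_bot_of_pos hc]

theorem EReal.ne_top_of_add_coe_le {u v : EReal} {a b : ℝ} (h : u + a ≤ v + b) (hv : v ≠ ⊤) :
    u ≠ ⊤ := by
  rintro rfl
  rw [EReal.top_add_coe] at h
  exact (h.trans_lt (EReal.add_lt_top hv (EReal.coe_ne_top b))).ne rfl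

variable {E : Type*} [NormedAddCommGroup E] [InnerProductSpace ℝ E]

def IsProxPoint (Ψ : E → EReal) (t : ℝ) (v p : E) : Prop :=
  ∀ q, Ψ p + ((‖v - p‖ ^ 2 / (2 * t) : ℝ) : EReal) ≤ Ψ q + ((‖v - q‖ ^ 2 / (2 * t) : ℝ) : EReal)

/-- Compare `p` with `p + μ • (z - p)` and let `μ → 0⁺`. -/
theorem IsProxPoint.toReal_le {Ψ : E → EReal} (hbot : ∀ x, Ψ x ≠ ⊥)
    (hconvex : ∀ x y : E, ∀ a b : ℝ, 0 ≤ a → 0 ≤ b → a + b = 1 →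
      Ψ (a • x + b • y) ≤ (a : EReal) * Ψ x + (b : EReal) * Ψ y)
    {t : ℝ} (ht : 0 < t) {v p z : E}
    (hmin : IsProxPoint Ψ t v p) (hp : Ψ p ≠ ⊤) (hz : Ψ z ≠ ⊤) :
    (Ψ p).toReal ≤ (Ψ z).toReal + ⟪v - p, p - z⟫ / t := by
  refine le_of_forall_le_add_mul (c := ‖z - p‖ ^ 2 / (2 * t)) fun μ hμ hμ1 => ?_
  have hq := (hmin (μ • z + (1 - μ) • p)).trans
    (add_le_add_left (hconvex z p μ (1 - μ) hμ.le (by linarith) (by ring)) _)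
  rw [← EReal.coe_toReal hp (hbot p), ← EReal.coe_toReal hz (hbot z)] at hq
  have hq' : (Ψ p).toReal + ‖v - p‖ ^ 2 / (2 * t) ≤ μ * (Ψ z).toReal
      + (1 - μ) * (Ψ p).toReal + ‖(v - p) - μ • (z - p)‖ ^ 2 / (2 * t) := by
    rw [show v - p - μ • (z - p) = v - (μ • z + (1 - μ) • p) by module]
    exact_mod_cast hq
  rw [norm_sub_sq_real (v - p), inner_smul_right, norm_smul, Real.norm_eq_abs, mul_pow,
    sq_abs] at hq'
  rw [← neg_sub z p, inner_neg_right]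
  refine le_of_mul_le_mul_left ?_ hμ
  field_simp at hq' ⊢
  nlinarith

theorem prox_grad_three_point {f : E → ℝ} {g w p z : E} {L α ψp ψz : ℝ} (hL : L ≠ 0)
    (hprox : ψp ≤ ψz + ⟪w - (1 / L) • g - p, p - z⟫ / (1 / L))
    (hsmooth : f p - f w - ⟪g, p - w⟫ ≤ L / 2 * ‖p - w‖ ^ 2)
    (hstrong : f w + ⟪g, z - w⟫ + α / 2 * ‖z - w‖ ^ 2 ≤ f z) :
    f p + ψp + L / 2 * ‖p - z‖ ^ 2 ≤ f z + ψz + (L - α) / 2 * ‖w - z‖ ^ 2 := by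
  have hgrad : ⟪w - (1 / L) • g - p, p - z⟫ / (1 / L) = L * ⟪w - p, p - z⟫ - ⟪g, p - z⟫ := by
    rw [sub_right_comm, inner_sub_left, real_inner_smul_left]
    field_simp
  have hg : ⟪g, p - w⟫ = ⟪g, p - z⟫ + ⟪g, z - w⟫ := by
    rw [← inner_add_right, sub_add_sub_cancel]
  have hnorm : ‖w - z‖ ^ 2 = ‖w - p‖ ^ 2 + 2 * ⟪w - p, p - z⟫ + ‖p - z‖ ^ 2 := by
    rw [← norm_add_sq_real, sub_add_sub_cancel]
  rw [hgrad] at hprox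
  rw [norm_sub_rev p w] at hsmooth
  rw [norm_sub_rev z w] at hstrong
  linear_combination hprox + hsmooth + hstrong + hg - L / 2 * hnorm

theorem potential_identity (s : ℝ) (hs : s ≠ 0) (P Q d : E) :
    ‖s • P + Q‖ ^ 2 + (1 - s⁻¹) * ((s ^ 2 - 1) * ‖d‖ ^ 2 - s ^ 2 * ‖P‖ ^ 2)
      + s⁻¹ * ((s ^ 2 - 1) * ‖d + Q‖ ^ 2 - s ^ 2 * ‖P + Q‖ ^ 2)
      = (1 - s⁻¹) * ‖(s + 1) • d + Q‖ ^ 2 - (s - s⁻¹) * ‖d‖ ^ 2 := by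
  simp only [norm_add_sq_real, norm_smul, inner_smul_left, mul_pow,
    Real.norm_eq_abs, sq_abs, RCLike.conj_to_real]
  field_simp
  ring

theorem potential_step {φ : E → ℝ} {s α : ℝ} (hs : 1 < s) (hα : 0 < α) {x₀ x₁ w z y₀ y₁ : E}
    (hy₀ : y₀ = x₀ + (s + 1) • (w - x₀)) (hy₁ : y₁ = x₁ + (s - 1) • (x₁ - x₀))
    (h₀ : φ x₁ + s ^ 2 * α / 2 * ‖x₁ - x₀‖ ^ 2 ≤ φ x₀ + (s ^ 2 * α - α) / 2 * ‖w - x₀‖ ^ 2)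
    (hz : φ x₁ + s ^ 2 * α / 2 * ‖x₁ - z‖ ^ 2 ≤ φ z + (s ^ 2 * α - α) / 2 * ‖w - z‖ ^ 2) :
    ‖y₁ - z‖ ^ 2 + 2 / α * (φ x₁ - φ z)
      ≤ (1 - s⁻¹) * (‖y₀ - z‖ ^ 2 + 2 / α * (φ x₀ - φ z)) - (s - s⁻¹) * ‖w - x₀‖ ^ 2 := by
  have hid := potential_identity s (by positivity) (x₁ - x₀) (x₀ - z) (w - x₀)
  have e1 : s • (x₁ - x₀) + (x₀ - z) = y₁ - z := by rw [hy₁]; module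
  have e2 : (s + 1) • (w - x₀) + (x₀ - z) = y₀ - z := by rw [hy₀]; module
  rw [e1, e2, sub_add_sub_cancel, sub_add_sub_cancel] at hid
  have c₀ : 0 ≤ (1 - s⁻¹) * (2 / α) :=
    mul_nonneg (sub_nonneg.mpr (inv_le_one_of_one_le₀ hs.le)) (by positivity)
  have h₀' := mul_le_mul_of_nonneg_left h₀ c₀
  have hz' := mul_le_mul_of_nonneg_left hz (by positivity : 0 ≤ s⁻¹ * (2 / α))
  linear_combination (norm := skip) h₀' + hz' + hid
  exact le_of_eq (by field_simp; ring)

theorem potential_le_of_descent {φ : E → ℝ} {s α : ℝ} (hs : 1 < s) (hα : 0 < α)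
    {x w y : ℕ → E} {z : E} {σ : ℕ → ℝ}
    (hy : ∀ k, y k = x k + (s + 1) • (w k - x k))
    (hy_succ : ∀ k, y (k + 1) = x (k + 1) + (s - 1) • (x (k + 1) - x k))
    (hdescent_x : ∀ k, φ (x (k + 1)) + s ^ 2 * α / 2 * ‖x (k + 1) - x k‖ ^ 2
      ≤ φ (x k) + (s ^ 2 * α - α) / 2 * ‖w k - x k‖ ^ 2)
    (hdescent_z : ∀ k, φ (x (k + 1)) + s ^ 2 * α / 2 * ‖x (k + 1) - z‖ ^ 2
      ≤ φ z + (s ^ 2 * α - α) / 2 * ‖w k - z‖ ^ 2)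
    (hσ0 : σ 0 = ‖y 0 - z‖ ^ 2 + 2 / α * (φ (x 0) - φ z))
    (hσ : ∀ k, σ (k + 1) = (1 - s⁻¹) * σ k - (s - s⁻¹) * ‖w k - x k‖ ^ 2) (k : ℕ) :
    ‖y k - z‖ ^ 2 + 2 / α * (φ (x k) - φ z) ≤ σ k := by
  induction k with
  | zero => exact hσ0.ge
  | succ k ih =>
    have hcoef : 0 ≤ 1 - s⁻¹ := sub_nonneg.mpr (inv_le_one_of_one_le₀ hs.le)
    rw [hσ]
    exact (potential_step hs hα (hy k) (hy_succ k) (hdescent_x k)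
      (hdescent_z k)).trans (by gcongr)

theorem accelerated_gradient_potential_bound_general {n : ℕ} (L α κ θ : ℝ)
    (hα : 0 < α) (hκ : κ = L / α) (hκ1 : 1 < κ)
    (hθ : θ = (Real.sqrt κ - 1) / (Real.sqrt κ + 1))
    (f : EuclideanSpace ℝ (Fin n) → ℝ)
    (f' : EuclideanSpace ℝ (Fin n) → EuclideanSpace ℝ (Fin n))
    (hsmooth : ∀ x y : EuclideanSpace ℝ (Fin n),
      |f x - f y - ⟪f' y, x - y⟫| ≤ L / 2 * ‖x - y‖ ^ 2)
    (hstrong : ∀ x y : EuclideanSpace ℝ (Fin n),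
      f x + ⟪f' x, y - x⟫ + α / 2 * ‖y - x‖ ^ 2 ≤ f y)
    (Ψ : EuclideanSpace ℝ (Fin n) → EReal)
    (hproper : (∀ x, Ψ x ≠ ⊥) ∧ (∃ x, Ψ x ≠ ⊤))
    (hconvex : ∀ x y : EuclideanSpace ℝ (Fin n), ∀ a b : ℝ, 0 ≤ a → 0 ≤ b → a + b = 1 →
      Ψ (a • x + b • y) ≤ (a : EReal) * Ψ x + (b : EReal) * Ψ y)
    (prox : ℝ → EuclideanSpace ℝ (Fin n) → EuclideanSpace ℝ (Fin n))
    (hprox : ∀ t : ℝ, 0 < t → ∀ x z : EuclideanSpace ℝ (Fin n),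
      Ψ (prox t x) + ((‖x - prox t x‖ ^ 2 / (2 * t) : ℝ) : EReal)
        ≤ Ψ z + ((‖x - z‖ ^ 2 / (2 * t) : ℝ) : EReal))
    (F : EuclideanSpace ℝ (Fin n) → EReal)
    (hF : ∀ x, F x = (f x : EReal) + Ψ x)
    (xstar : EuclideanSpace ℝ (Fin n))
    (x w y : ℕ → EuclideanSpace ℝ (Fin n))
    (hw0 : w 0 = x 0)
    (hxk : ∀ k : ℕ, x (k + 1) = prox (1 / L) (w k - (1 / L) • f' (w k)))
    (hwk : ∀ k : ℕ, w (k + 1) = x (k + 1) + θ • (x (k + 1) - x k))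
    (hy0 : y 0 = x 0)
    (hyk : ∀ k : ℕ, y (k + 1) = x (k + 1) + (Real.sqrt κ - 1) • (x (k + 1) - x k))
    (σ : ℕ → ℝ)
    (hσ0 : ((σ 0 : ℝ) : EReal) = ((‖y 0 - xstar‖ ^ 2 : ℝ) : EReal)
        + ((2 / α : ℝ) : EReal) * (F (x 0) - F xstar))
    (hσk : ∀ k : ℕ, σ (k + 1) = (1 - (Real.sqrt κ)⁻¹) * σ k
        - (Real.sqrt κ - (Real.sqrt κ)⁻¹) * ‖w k - x k‖ ^ 2) :
    ∀ k : ℕ,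
      ((‖y k - xstar‖ ^ 2 : ℝ) : EReal)
          + ((2 / α : ℝ) : EReal) * (F (x k) - F xstar)
        ≤ ((σ k : ℝ) : EReal) := by
  obtain ⟨hbot, -⟩ := hproper
  set s := Real.sqrt κ
  have hs : 1 < s := (Real.lt_sqrt zero_le_one).mpr (by simpa using hκ1)
  have hL : L = s ^ 2 * α := by
    rw [Real.sq_sqrt (by linarith), hκ, div_mul_cancel₀ _ hα.ne']
  have hL_pos : 0 < L := by rw [hL]; positivity
  have ht : 0 < 1 / L := by positivity
  have hF_ne_bot : ∀ p, F p ≠ ⊥ := fun p => by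
    rw [hF]; exact EReal.add_ne_bot_iff.mpr ⟨EReal.coe_ne_bot _, hbot p⟩
  have hΨ_ne_top : ∀ p, F p ≠ ⊤ → Ψ p ≠ ⊤ := fun p hp h => hp (by rw [hF, h, EReal.coe_add_top])
  obtain ⟨hx0, hz⟩ := (EReal.ne_top_of_coe_eq_add_mul_sub (by positivity) (hF_ne_bot _)
    (hF_ne_bot _) hσ0).imp (hΨ_ne_top _) (hΨ_ne_top _)
  have hx : ∀ k, Ψ (x k) ≠ ⊤
    | 0 => hx0
    | k + 1 => hxk k ▸ EReal.ne_top_of_add_coe_le (hprox _ ht _ xstar) hz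
  set φ := fun p => f p + (Ψ p).toReal
  have hFφ : ∀ p, Ψ p ≠ ⊤ → F p = φ p := fun p hp => by
    rw [hF, ← EReal.coe_toReal hp (hbot p), EReal.coe_add]
  have hdescent : ∀ k u, Ψ u ≠ ⊤ → φ (x (k + 1)) + s ^ 2 * α / 2 * ‖x (k + 1) - u‖ ^ 2
      ≤ φ u + (s ^ 2 * α - α) / 2 * ‖w k - u‖ ^ 2 := fun k u hu => by
    rw [← hL, hxk k]
    exact prox_grad_three_point hL_pos.ne'
      (IsProxPoint.toReal_le hbot hconvex ht (hprox _ ht _) (hxk k ▸ hx (k + 1)) hu)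
      (abs_le.mp (hsmooth _ _)).2 (hstrong _ _)
  have hy : ∀ k, y k = x k + (s + 1) • (w k - x k)
    | 0 => by simp [hy0, hw0]
    | k + 1 => by
      rw [hyk, hwk, add_sub_cancel_left, smul_smul, hθ, mul_div_cancel₀ _ (by positivity)]
  rw [hFφ _ (hx 0), hFφ _ hz] at hσ0
  intro k
  rw [hFφ _ (hx k), hFφ _ hz]
  exact_mod_cast potential_le_of_descent hs hα hy hyk (fun k => hdescent k _ (hx k))
    (fun k => hdescent k _ hz) (by exact_mod_cast hσ0) hσk k

/-- potential bound for Nesterov's accelerated gradient method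
in the strongly convex composite setting:
`‖y_k − x*‖² + 2(F(x_k) − F(x*))/α ≤ σ̃_k²`. -/
theorem accelerated_gradient_potential_bound {n : ℕ} (L α κ θ : ℝ)
    (hα : 0 < α) (hαL : α ≤ L) (hκ : κ = L / α) (hκ1 : 1 < κ)
    (hθ : θ = (Real.sqrt κ - 1) / (Real.sqrt κ + 1))
    (f : EuclideanSpace ℝ (Fin n) → ℝ)
    (f' : EuclideanSpace ℝ (Fin n) → EuclideanSpace ℝ (Fin n))
    (hdiff : ∀ x, HasGradientAt f (f' x) x)
    (hsmooth : ∀ x y : EuclideanSpace ℝ (Fin n),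
      |f x - f y - ⟪f' y, x - y⟫| ≤ L / 2 * ‖x - y‖ ^ 2)
    (hstrong : ∀ x y : EuclideanSpace ℝ (Fin n),
      f x + ⟪f' x, y - x⟫ + α / 2 * ‖y - x‖ ^ 2 ≤ f y)
    (Ψ : EuclideanSpace ℝ (Fin n) → EReal)
    (hproper : (∀ x, Ψ x ≠ ⊥) ∧ (∃ x, Ψ x ≠ ⊤))
    (hclosed : LowerSemicontinuous Ψ)
    (hconvex : ∀ x y : EuclideanSpace ℝ (Fin n), ∀ a b : ℝ, 0 ≤ a → 0 ≤ b → a + b = 1 →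
      Ψ (a • x + b • y) ≤ (a : EReal) * Ψ x + (b : EReal) * Ψ y)
    (prox : ℝ → EuclideanSpace ℝ (Fin n) → EuclideanSpace ℝ (Fin n))
    (hprox : ∀ t : ℝ, 0 < t → ∀ x z : EuclideanSpace ℝ (Fin n),
      Ψ (prox t x) + ((‖x - prox t x‖ ^ 2 / (2 * t) : ℝ) : EReal)
        ≤ Ψ z + ((‖x - z‖ ^ 2 / (2 * t) : ℝ) : EReal))
    (F : EuclideanSpace ℝ (Fin n) → EReal)
    (hF : ∀ x, F x = (f x : EReal) + Ψ x)
    (G : ℝ → EuclideanSpace ℝ (Fin n) → EuclideanSpace ℝ (Fin n))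
    (hG : ∀ t x, G t x = t⁻¹ • (x - prox t (x - t • f' x)))
    (xstar : EuclideanSpace ℝ (Fin n)) (hxstar : ∀ w, F xstar ≤ F w)
    (x w y : ℕ → EuclideanSpace ℝ (Fin n))
    (hw0 : w 0 = x 0)
    (hxk : ∀ k : ℕ, x (k + 1) = prox (1 / L) (w k - (1 / L) • f' (w k)))
    (hwk : ∀ k : ℕ, w (k + 1) = x (k + 1) + θ • (x (k + 1) - x k))
    (hy0 : y 0 = x 0)
    (hyk : ∀ k : ℕ, y (k + 1) = x (k + 1) + (Real.sqrt κ - 1) • (x (k + 1) - x k))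
    (σ : ℕ → ℝ)
    (hσ0 : ((σ 0 : ℝ) : EReal) = ((‖y 0 - xstar‖ ^ 2 : ℝ) : EReal)
        + ((2 / α : ℝ) : EReal) * (F (x 0) - F xstar))
    (hσk : ∀ k : ℕ, σ (k + 1) = (1 - (Real.sqrt κ)⁻¹) * σ k
        - (Real.sqrt κ - (Real.sqrt κ)⁻¹) * ‖w k - x k‖ ^ 2) :
    ∀ k : ℕ,
      ((‖y k - xstar‖ ^ 2 : ℝ) : EReal)
          + ((2 / α : ℝ) : EReal) * (F (x k) - F xstar)
        ≤ ((σ k : ℝ) : EReal) :=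
  accelerated_gradient_potential_bound_general L α κ θ hα hκ hκ1 hθ f f' hsmooth hstrong Ψ hproper
    hconvex prox hprox F hF xstar x w y hw0 hxk hwk hy0 hyk σ hσ0 hσk
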